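/- arXiv:2008.04000 — 2 statements merged into one kernel-verified Lean document; each statement's English description precedes it below -/
import Mathlib

section
/- For every integer n ≥ 1 and every p ∈ [1, ∞], the Mahler volume of the l^p unit ball satisfies Vol(B^n_p) · Vol((B^n_p)°) ≥ 4^n / n!. -/
/-!
For the Hölder conjugate `q` of `p`, Young's inequality puts `B^n_q` inside the polar of
`B^n_p`, and `Vol(B^n_p) = (2 Γ(1 + 1/p))^n / Γ(1 + n/p)`. With `a = 1/p`, `b = 1/q` the bound
reduces to `Γ(1 + na) Γ(1 + nb) ≤ n! (Γ(1 + a) Γ(1 + b))^n`, proved by induction on `n`: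
Gautschi's inequality `Γ(x + a) ≤ Γ(x) x^a` (log-convexity of `Γ`) and weighted AM-GM bound the
ratio of consecutive left-hand sides by `1 + k (a² + b²)`, and this is at most
`(k + 1) Γ(1 + a) Γ(1 + b)` for `k ≥ 1` because, by the reflection formula and a Taylor bound
for `sin`, `Γ(1 + a) Γ(1 + b) = π a b / sin (π a) ≥ 1 - a b`.
-/

open MeasureTheory
open scoped ENNReal

/-- The open unit ball of the `l^p` norm in `ℝ^n`, for `p ∈ [1, ∞]`. -/
noncomputable def lpBall (n : ℕ) (p : ℝ≥0∞) : Set (Fin n → ℝ) :=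
  if p = ⊤ then {x | ∀ i, |x i| < 1} else {x | ∑ i, |x i| ^ p.toReal < 1}

/-- The polar of a subset of `ℝ^n` with respect to the Euclidean inner product. -/
def polarSet {n : ℕ} (S : Set (Fin n → ℝ)) : Set (Fin n → ℝ) :=
  {x | ∀ y ∈ S, ∑ i, y i * x i ≤ 1}

open Real
open scoped Nat

theorem nonneg_of_hasDerivAt_of_nonneg {f f' : ℝ → ℝ} (hf : ∀ x, HasDerivAt f (f' x) x)
    (hf' : ∀ x, 0 ≤ x → 0 ≤ f' x) (h0 : f 0 = 0) {x : ℝ} (hx : 0 ≤ x) : 0 ≤ f x := by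
  have hmono : MonotoneOn f (Set.Ici 0) :=
    monotoneOn_of_hasDerivWithinAt_nonneg (convex_Ici 0)
      (fun y _ => (hf y).continuousAt.continuousWithinAt)
      (fun y _ => (hf y).hasDerivWithinAt) (fun y hy => hf' y (interior_subset hy))
  simpa [h0] using hmono Set.self_mem_Ici hx hx

theorem Real.cos_le_taylor_four {x : ℝ} (hx : 0 ≤ x) :
    cos x ≤ 1 - x ^ 2 / 2 + x ^ 4 / 24 := by
  have := nonneg_of_hasDerivAt_of_nonneg (f := fun x => 1 - x ^ 2 / 2 + x ^ 4 / 24 - cos x)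
    (fun y => ((((hasDerivAt_const y 1).sub ((hasDerivAt_pow 2 y).div_const 2)).add
      ((hasDerivAt_pow 4 y).div_const 24)).sub (hasDerivAt_cos y)))
    (fun y hy => by nlinarith [sin_ge_sub_cube hy]) (by simp) hx
  linarith

theorem Real.sin_le_taylor_five {x : ℝ} (hx : 0 ≤ x) :
    sin x ≤ x - x ^ 3 / 6 + x ^ 5 / 120 := by
  have := nonneg_of_hasDerivAt_of_nonneg (f := fun x => x - x ^ 3 / 6 + x ^ 5 / 120 - sin x)
    (fun y => ((((hasDerivAt_id y).sub ((hasDerivAt_pow 3 y).div_const 6)).add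
      ((hasDerivAt_pow 5 y).div_const 120)).sub (hasDerivAt_sin y)))
    (fun y hy => by nlinarith [cos_le_taylor_four hy]) (by simp) hx
  linarith

theorem Real.Gamma_add_le_Gamma_mul_rpow {x t : ℝ} (hx : 0 < x) (ht₀ : 0 < t) (ht₁ : t < 1) :
    Gamma (x + t) ≤ Gamma x * x ^ t := by
  have h := Gamma_mul_add_mul_le_rpow_Gamma_mul_rpow_Gamma hx (by linarith : 0 < x + 1)
    (by linarith : 0 < 1 - t) ht₀ (by ring)
  rw [Gamma_add_one hx.ne', mul_rpow hx.le (Gamma_pos_of_pos hx).le, mul_comm (x ^ t),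
    ← mul_assoc, ← rpow_add (Gamma_pos_of_pos hx), sub_add_cancel, rpow_one] at h
  convert h using 2
  ring

theorem Real.sin_pi_mul_le {a : ℝ} (ha₀ : 0 ≤ a) (ha : a ≤ 1 / 2) :
    sin (π * a) ≤ π * a * (1 - 4 / 3 * a ^ 2) := by
  have hπ : 3.14 < π := pi_gt_d2
  have hπ' : π < 3.15 := pi_lt_d2
  have hπ2 : 9.85 < π ^ 2 ∧ π ^ 2 < 9.93 := ⟨by nlinarith, by nlinarith⟩
  have hc : 0 ≤ π ^ 2 / 6 - π ^ 4 / 480 - 4 / 3 := by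
    nlinarith [mul_pos (sub_pos.2 hπ2.1) (sub_pos.2 hπ2.2)]
  have ha2 : 0 ≤ 1 / 4 - a ^ 2 := by nlinarith
  have hπa : 0 ≤ π * a ^ 3 := by positivity
  nlinarith [sin_le_taylor_five (mul_nonneg pi_pos.le ha₀), mul_nonneg hπa hc,
    mul_nonneg (mul_nonneg hπa (pow_nonneg pi_pos.le 4)) ha2]

theorem Real.one_sub_mul_le_Gamma_mul_Gamma_of_le_half {a : ℝ} (ha₀ : 0 < a)
    (ha : a ≤ 1 / 2) :
    1 - a * (1 - a) ≤ Gamma (a + 1) * Gamma (1 - a + 1) := by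
  have hsin : 0 < sin (π * a) := sin_pos_of_pos_of_lt_pi (by positivity) (by nlinarith [pi_pos])
  rw [Gamma_add_one ha₀.ne', Gamma_add_one (by linarith), mul_mul_mul_comm,
    Gamma_mul_Gamma_one_sub, ← mul_div_assoc, le_div_iff₀ hsin]
  have := sin_pi_mul_le ha₀.le ha
  nlinarith [mul_nonneg (mul_nonneg pi_pos.le (pow_nonneg ha₀.le 3)) (sq_nonneg (1 - 2 * a))]

theorem Real.one_sub_mul_le_Gamma_mul_Gamma {a b : ℝ} (ha : 0 < a) (hb : 0 < b)
    (hab : a + b = 1) :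
    1 - a * b ≤ Gamma (a + 1) * Gamma (b + 1) := by
  obtain rfl : b = 1 - a := by linarith
  rcases le_total a (1 / 2) with h | h
  · exact one_sub_mul_le_Gamma_mul_Gamma_of_le_half ha h
  · simpa [mul_comm] using one_sub_mul_le_Gamma_mul_Gamma_of_le_half hb (by linarith)

theorem Real.Gamma_mul_Gamma_succ_le {a b x : ℝ} (ha : 0 < a) (hb : 0 < b) (hab : a + b = 1)
    (hx : 1 ≤ x) :
    Gamma ((x + 1) * a + 1) * Gamma ((x + 1) * b + 1) ≤
      (x + 1) * (Gamma (a + 1) * Gamma (b + 1)) * (Gamma (x * a + 1) * Gamma (x * b + 1)) := by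
  have hxa : 0 < x * a + 1 := by positivity
  have hxb : 0 < x * b + 1 := by positivity
  have hΓa := Gamma_add_le_Gamma_mul_rpow hxa ha (by linarith)
  have hΓb := Gamma_add_le_Gamma_mul_rpow hxb hb (by linarith)
  have hamgm := geom_mean_le_arith_mean2_weighted ha.le hb.le hxa.le hxb.le hab
  have hG := one_sub_mul_le_Gamma_mul_Gamma ha hb hab
  have hlin : a * (x * a + 1) + b * (x * b + 1) ≤ (x + 1) * (1 - a * b) := by
    obtain rfl : b = 1 - a := by linarith
    nlinarith [mul_nonneg (sub_nonneg.2 hx) (mul_pos ha hb).le]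
  calc Gamma ((x + 1) * a + 1) * Gamma ((x + 1) * b + 1)
      = Gamma (x * a + 1 + a) * Gamma (x * b + 1 + b) := by ring_nf
    _ ≤ Gamma (x * a + 1) * (x * a + 1) ^ a * (Gamma (x * b + 1) * (x * b + 1) ^ b) :=
      mul_le_mul hΓa hΓb (Gamma_pos_of_pos (by positivity)).le (by positivity)
    _ = (x * a + 1) ^ a * (x * b + 1) ^ b * (Gamma (x * a + 1) * Gamma (x * b + 1)) := by ring
    _ ≤ (x + 1) * (Gamma (a + 1) * Gamma (b + 1)) * (Gamma (x * a + 1) * Gamma (x * b + 1)) := by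
      refine mul_le_mul_of_nonneg_right ?_ (by positivity)
      nlinarith

theorem Real.Gamma_nat_mul_add_one_mul_Gamma_le {a b : ℝ} (ha : 0 ≤ a) (hb : 0 ≤ b)
    (hab : a + b = 1) (n : ℕ) :
    Gamma (n * a + 1) * Gamma (n * b + 1) ≤ n ! * (Gamma (a + 1) * Gamma (b + 1)) ^ n := by
  rcases ha.eq_or_lt with rfl | ha
  · obtain rfl : b = 1 := by linarith
    simp [Gamma_nat_eq_factorial, one_add_one_eq_two]
  rcases hb.eq_or_lt with rfl | hb
  · obtain rfl : a = 1 := by linarith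
    simp [Gamma_nat_eq_factorial, one_add_one_eq_two]
  rcases Nat.eq_zero_or_pos n with rfl | hn
  · simp
  set G := Gamma (a + 1) * Gamma (b + 1)
  induction n, hn using Nat.le_induction with
  | base => simp [G]
  | succ k hk ih =>
    have hk' : (1 : ℝ) ≤ k := by exact_mod_cast hk
    calc Gamma ((k + 1 : ℕ) * a + 1) * Gamma ((k + 1 : ℕ) * b + 1)
        ≤ (k + 1) * G * (Gamma (k * a + 1) * Gamma (k * b + 1)) := by
          push_cast; exact Gamma_mul_Gamma_succ_le ha hb hab hk'
      _ ≤ (k + 1) * G * (k ! * G ^ k) := by gcongr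
      _ = (k + 1 : ℕ) ! * G ^ (k + 1) := by push_cast [Nat.factorial_succ]; ring

noncomputable def lpBallVolume (n : ℕ) (a : ℝ) : ℝ :=
  (2 * Gamma (a + 1)) ^ n / Gamma (n * a + 1)

theorem lpBallVolume_nonneg (n : ℕ) {a : ℝ} (ha : 0 ≤ a) : 0 ≤ lpBallVolume n a := by
  unfold lpBallVolume
  positivity

theorem four_pow_div_factorial_le_lpBallVolume_mul {a b : ℝ} (ha : 0 ≤ a) (hb : 0 ≤ b)
    (hab : a + b = 1) (n : ℕ) : 4 ^ n / n ! ≤ lpBallVolume n a * lpBallVolume n b := by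
  rw [lpBallVolume, lpBallVolume, div_mul_div_comm,
    div_le_div_iff₀ (by positivity) (by positivity), ← mul_pow, mul_mul_mul_comm,
    show (2 : ℝ) * 2 = 4 by norm_num, mul_pow, mul_assoc, mul_comm _ (n ! : ℝ)]
  exact mul_le_mul_of_nonneg_left (Gamma_nat_mul_add_one_mul_Gamma_le ha hb hab n) (by positivity)

theorem ENNReal.HolderConjugate.toReal_inv_add_toReal_inv (p q : ℝ≥0∞) [p.HolderConjugate q] :
    p⁻¹.toReal + q⁻¹.toReal = 1 := by
  have hp : p⁻¹ ≠ ⊤ := ENNReal.inv_ne_top.2 (ENNReal.HolderConjugate.ne_zero p q)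
  have hq : q⁻¹ ≠ ⊤ := ENNReal.inv_ne_top.2 (ENNReal.HolderConjugate.ne_zero q p)
  rw [← ENNReal.toReal_add hp hq, ENNReal.HolderConjugate.inv_add_inv_eq_one p q,
    ENNReal.toReal_one]

theorem lpBall_top (n : ℕ) : lpBall n ⊤ = Metric.ball 0 1 := by
  ext x
  simp [lpBall, pi_norm_lt_iff one_pos]

theorem lpBall_of_ne_top (n : ℕ) {p : ℝ≥0∞} (hp : p ≠ ⊤) :
    lpBall n p = {x | ∑ i, |x i| ^ p.toReal < 1} :=
  if_neg hp

theorem lpBall_one (n : ℕ) : lpBall n 1 = {x | ∑ i, |x i| < 1} := by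
  simp [lpBall_of_ne_top]

theorem volume_lpBall (n : ℕ) {p : ℝ≥0∞} (hp : 1 ≤ p) :
    volume (lpBall n p) = .ofReal (lpBallVolume n p⁻¹.toReal) := by
  rcases eq_or_ne p ⊤ with rfl | hp_top
  · simp [lpBallVolume, lpBall_top]
  · have := volume_sum_rpow_lt_one (Fin n) (ENNReal.toReal_mono hp_top hp)
    simp_all [lpBallVolume, lpBall_of_ne_top, ENNReal.toReal_inv, div_eq_mul_inv]

theorem sum_abs_mul_abs_le_one_of_abs_lt_one {ι : Type*} [Fintype ι] {x y : ι → ℝ}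
    (hy : ∀ i, |y i| < 1) (hx : ∑ i, |x i| < 1) : ∑ i, |y i| * |x i| ≤ 1 :=
  calc ∑ i, |y i| * |x i| ≤ ∑ i, |x i| :=
        Finset.sum_le_sum fun i _ => mul_le_of_le_one_left (abs_nonneg _) (hy i).le
    _ ≤ 1 := hx.le

theorem sum_abs_mul_abs_le_one {n : ℕ} {p q : ℝ≥0∞} [hpq : p.HolderConjugate q]
    {x y : Fin n → ℝ} (hy : y ∈ lpBall n p) (hx : x ∈ lpBall n q) :
    ∑ i, |y i| * |x i| ≤ 1 := by
  rcases eq_or_ne p ⊤ with rfl | hp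
  · obtain rfl : q = 1 := ENNReal.HolderConjugate.unique ⊤ q 1
    rw [lpBall_one] at hx
    exact sum_abs_mul_abs_le_one_of_abs_lt_one (by simpa [lpBall] using hy) hx
  rcases eq_or_ne q ⊤ with rfl | hq
  · obtain rfl : p = 1 := ENNReal.HolderConjugate.unique ⊤ p 1
    rw [lpBall_one] at hy
    exact (Finset.sum_congr rfl fun _ _ => mul_comm _ _).trans_le
      (sum_abs_mul_abs_le_one_of_abs_lt_one (by simpa [lpBall] using hx) hy)
  rw [lpBall_of_ne_top n hp] at hy
  rw [lpBall_of_ne_top n hq] at hx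
  have hpq' := hpq.toReal_of_ne_top hp hq
  calc ∑ i, |y i| * |x i|
      ≤ ∑ i, (|y i| ^ p.toReal / p.toReal + |x i| ^ q.toReal / q.toReal) :=
        Finset.sum_le_sum fun i _ => young_inequality_of_nonneg (abs_nonneg _) (abs_nonneg _) hpq'
    _ = (∑ i, |y i| ^ p.toReal) / p.toReal + (∑ i, |x i| ^ q.toReal) / q.toReal := by
        rw [Finset.sum_add_distrib, Finset.sum_div, Finset.sum_div]
    _ ≤ 1 / p.toReal + 1 / q.toReal := by
        gcongr
        exacts [hy.le, hx.le]
    _ = 1 := by simpa only [one_div] using hpq'.inv_add_inv_eq_one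

theorem lpBall_subset_polarSet_lpBall (n : ℕ) (p q : ℝ≥0∞) [p.HolderConjugate q] :
    lpBall n q ⊆ polarSet (lpBall n p) := fun x hx y hy =>
  calc ∑ i, y i * x i ≤ ∑ i, |y i| * |x i| :=
        Finset.sum_le_sum fun _ _ => (le_abs_self _).trans (abs_mul _ _).le
    _ ≤ 1 := sum_abs_mul_abs_le_one hy hx

theorem mahler_volume_lpBall_ge_general (n : ℕ) (p : ℝ≥0∞) (hp : 1 ≤ p) :
    ENNReal.ofReal (4 ^ n / (Nat.factorial n : ℝ)) ≤
      volume (lpBall n p) * volume (polarSet (lpBall n p)) := by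
  obtain ⟨q, hpq⟩ : ∃ q, p.HolderConjugate q := ⟨_, .conjExponent hp⟩
  calc ENNReal.ofReal (4 ^ n / n !)
      ≤ .ofReal (lpBallVolume n p⁻¹.toReal * lpBallVolume n q⁻¹.toReal) :=
        ENNReal.ofReal_le_ofReal <| four_pow_div_factorial_le_lpBallVolume_mul
          ENNReal.toReal_nonneg ENNReal.toReal_nonneg hpq.toReal_inv_add_toReal_inv n
    _ = volume (lpBall n p) * volume (lpBall n q) := by
        rw [ENNReal.ofReal_mul (lpBallVolume_nonneg n ENNReal.toReal_nonneg), volume_lpBall n hp,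
          volume_lpBall n hpq.symm.one_le]
    _ ≤ volume (lpBall n p) * volume (polarSet (lpBall n p)) := by
        gcongr
        exact lpBall_subset_polarSet_lpBall n p q

/-- For every `n ≥ 1` and every `p ∈ [1, ∞]`, the Mahler volume of the `l^p`
unit ball satisfies `Vol(B^n_p) · Vol((B^n_p)°) ≥ 4^n / n!`. -/
theorem mahler_volume_lpBall_ge (n : ℕ) (hn : 1 ≤ n) (p : ℝ≥0∞) (hp : 1 ≤ p) :
    ENNReal.ofReal (4 ^ n / (Nat.factorial n : ℝ)) ≤
      volume (lpBall n p) * volume (polarSet (lpBall n p)) :=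
  mahler_volume_lpBall_ge_general n p hp
end

section
/- Fix an integer n ≥ 1 and set a = 1/n. The function f(y) = a · (1 − y) · y^{a−1} / (1 − y^a) is strictly decreasing on (0, 1), tends to 1 as y → 1⁻, and hence satisfies f(y) > 1 for all y ∈ (0, 1). -/
open Set Filter Real Finset

private lemma f_eq_sum (n : ℕ) (hn : 2 ≤ n) {y : ℝ} (hy : y ∈ Ioo (0:ℝ) 1) :
    (1/n : ℝ) * (1 - y) * y ^ ((1/n : ℝ) - 1) / (1 - y ^ (1/n : ℝ)) =
      (1/n : ℝ) * ∑ j ∈ Finset.range n, y ^ (((j:ℝ)+1)/n - 1) := by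
  have hy0 : (0:ℝ) < y := hy.1
  have hy1 : y < 1 := hy.2
  have hn0 : (n:ℝ) ≠ 0 := by positivity
  have ha : (0:ℝ) < 1/n := by positivity
  have hya : y ^ (1/n : ℝ) < 1 := Real.rpow_lt_one hy0.le hy1 ha
  have hne : (1 : ℝ) - y ^ (1/n : ℝ) ≠ 0 := by linarith
  have h1 : (y ^ (1/n : ℝ)) ^ n = y := by
    rw [← Real.rpow_natCast (y ^ (1/n : ℝ)) n, ← Real.rpow_mul hy0.le]
    rw [one_div, inv_mul_cancel₀ hn0, Real.rpow_one]
  have hgeom : 1 - y = (1 - y ^ (1/n : ℝ)) * ∑ j ∈ Finset.range n, (y ^ (1/n : ℝ)) ^ j := by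
    have := geom_sum_mul (y ^ (1/n : ℝ)) n
    rw [h1] at this
    linarith [this]
  have hterm : (∑ j ∈ Finset.range n, (y ^ (1/n : ℝ)) ^ j) * y ^ ((1/n : ℝ) - 1)
      = ∑ j ∈ Finset.range n, y ^ (((j:ℝ)+1)/n - 1) := by
    rw [Finset.sum_mul]
    refine Finset.sum_congr rfl fun j _ => ?_
    rw [← Real.rpow_natCast (y ^ (1/n : ℝ)) j, ← Real.rpow_mul hy0.le, ← Real.rpow_add hy0]
    congr 1
    field_simp
    ring
  rw [div_eq_iff hne, hgeom, ← hterm]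
  ring

/-- For an integer `n ≥ 2` (so that `a = 1/n ∈ (0,1)`), the function
`f(y) = a (1 − y) y^{a−1}/(1 − y^a)` is strictly decreasing on `(0, 1)`,
tends to `1` as `y → 1⁻`, and satisfies `f(y) > 1` for all `y ∈ (0, 1)`. -/
theorem f_strictAnti_tendsto_gt_one (n : ℕ) (hn : 2 ≤ n) :
    let a : ℝ := 1 / n
    let f : ℝ → ℝ := fun y => a * (1 - y) * y ^ (a - 1) / (1 - y ^ a)
    StrictAntiOn f (Ioo (0 : ℝ) 1) ∧
      Tendsto f (nhdsWithin 1 (Iio (1 : ℝ))) (nhds 1) ∧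
      ∀ y ∈ Ioo (0 : ℝ) 1, 1 < f y := by
  intro a f
  have hn0 : (n:ℝ) ≠ 0 := by positivity
  have hnpos : (0:ℝ) < n := by positivity
  have key : ∀ y ∈ Ioo (0:ℝ) 1,
      f y = (1/n : ℝ) * ∑ j ∈ Finset.range n, y ^ (((j:ℝ)+1)/n - 1) :=
    fun y hy => f_eq_sum n hn hy
  -- exponents are nonpositive, with the first one negative
  have hexp : ∀ j ∈ Finset.range n, (((j:ℝ)+1)/n - 1) ≤ 0 := by
    intro j hj
    rw [Finset.mem_range] at hj
    have : ((j:ℝ)+1) ≤ n := by exact_mod_cast Nat.succ_le_of_lt hj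
    rw [sub_nonpos, div_le_one hnpos]
    exact this
  have hexp0 : (((0:ℕ):ℝ)+1)/n - 1 < 0 := by
    rw [sub_neg, div_lt_one hnpos]
    push_cast
    exact_mod_cast by exact_mod_cast lt_of_lt_of_le one_lt_two (by exact_mod_cast hn)
  refine ⟨?_, ?_, ?_⟩
  · intro x hx y hy hxy
    rw [key x hx, key y hy]
    have hsum : ∑ j ∈ Finset.range n, y ^ (((j:ℝ)+1)/n - 1)
        < ∑ j ∈ Finset.range n, x ^ (((j:ℝ)+1)/n - 1) := by
      refine Finset.sum_lt_sum (fun j hj => Real.rpow_le_rpow_of_nonpos hx.1 hxy.le (hexp j hj))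
        ⟨0, Finset.mem_range.2 (by omega), Real.rpow_lt_rpow_of_neg hx.1 hxy hexp0⟩
    have : (0:ℝ) < 1/n := by positivity
    exact mul_lt_mul_of_pos_left hsum this
  · have hmem : Ioo (0:ℝ) 1 ∈ nhdsWithin (1:ℝ) (Iio 1) :=
      Ioo_mem_nhdsLT_of_mem (by constructor <;> norm_num)
    have heq : f =ᶠ[nhdsWithin (1:ℝ) (Iio 1)] fun y =>
        (1/n : ℝ) * ∑ j ∈ Finset.range n, y ^ (((j:ℝ)+1)/n - 1) :=
      eventually_of_mem hmem key
    refine Tendsto.congr' heq.symm ?_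
    have hsum : Tendsto (fun y : ℝ => ∑ j ∈ Finset.range n, y ^ (((j:ℝ)+1)/n - 1))
        (nhdsWithin 1 (Iio 1)) (nhds (n:ℝ)) := by
      have : Tendsto (fun y : ℝ => ∑ j ∈ Finset.range n, y ^ (((j:ℝ)+1)/n - 1))
          (nhdsWithin 1 (Iio 1)) (nhds (∑ _j ∈ Finset.range n, (1:ℝ))) := by
        refine tendsto_finset_sum _ fun j _ => ?_
        have hc : ContinuousAt (fun y : ℝ => y ^ (((j:ℝ)+1)/n - 1)) 1 :=
          Real.continuousAt_rpow_const 1 _ (Or.inl one_ne_zero)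
        have := tendsto_nhdsWithin_of_tendsto_nhds (s := Iio (1:ℝ)) hc.tendsto
        simpa [Real.one_rpow] using this
      simpa using this
    have := hsum.const_mul (1/n : ℝ)
    have h1 : (1/n : ℝ) * n = 1 := by field_simp
    rw [h1] at this
    exact this
  · intro y hy
    rw [key y hy]
    have hsum : (n:ℝ) < ∑ j ∈ Finset.range n, y ^ (((j:ℝ)+1)/n - 1) := by
      have : ∑ _j ∈ Finset.range n, (1:ℝ) < ∑ j ∈ Finset.range n, y ^ (((j:ℝ)+1)/n - 1) := by
        refine Finset.sum_lt_sum (fun j hj => ?_) ⟨0, Finset.mem_range.2 (by omega), ?_⟩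
        · rcases lt_or_eq_of_le (hexp j hj) with h | h
          · exact (Real.one_lt_rpow_of_pos_of_lt_one_of_neg hy.1 hy.2 h).le
          · rw [h, Real.rpow_zero]
        · exact Real.one_lt_rpow_of_pos_of_lt_one_of_neg hy.1 hy.2 hexp0
      simpa using this
    calc (1:ℝ) = (1/n) * n := by field_simp
    _ < (1/n : ℝ) * ∑ j ∈ Finset.range n, y ^ (((j:ℝ)+1)/n - 1) :=
        mul_lt_mul_of_pos_left hsum (by positivity)
end
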